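/- arXiv:2510.15791 — 3 statements merged into one kernel-verified Lean document; each statement's English description precedes it below -/
import Mathlib

section
/- (Gallai–Roy) If a directed graph D contains no directed path with 3 edges, then the underlying undirected graph of D is 3-colorable (has chromatic number at most 3). -/
/-- Gallai–Roy (special case): a digraph with no directed path with 3 edges has
3-colorable underlying undirected graph. -/
theorem stmt_2 {V : Type*} [Fintype V] (D : V → V → Prop)
    (hpath : ¬ ∃ v0 v1 v2 v3 : V,
      v0 ≠ v1 ∧ v0 ≠ v2 ∧ v0 ≠ v3 ∧ v1 ≠ v2 ∧ v1 ≠ v3 ∧ v2 ≠ v3 ∧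
      D v0 v1 ∧ D v1 v2 ∧ D v2 v3) :
    (SimpleGraph.fromRel D).Colorable 3 := by
  classical
  -- the set of arcs between distinct vertices
  set A : Set (V × V) := {p | D p.1 p.2 ∧ p.1 ≠ p.2} with hA
  -- acyclic subsets of A
  set F : Set (Set (V × V)) :=
    {s | s ⊆ A ∧ ∀ x, ¬ Relation.TransGen (fun a b => (a, b) ∈ s) x x} with hF
  have hFfin : F.Finite := Set.toFinite _
  have hFne : F.Nonempty := by
    refine ⟨∅, by simp, ?_⟩
    intro x hx
    cases hx with
    | single h => exact h
    | tail _ h => exact h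
  obtain ⟨m, hmF, hmax⟩ : ∃ m ∈ F, ∀ m' ∈ F, id m ≤ id m' → id m = id m' := by
    obtain ⟨m, hmF, hmax⟩ := Set.Finite.exists_maximalFor id F hFfin hFne
    exact ⟨m, hmF, fun m' hm' h => le_antisymm h (hmax hm' h)⟩
  obtain ⟨hsub, hacy⟩ := hmF
  set r : V → V → Prop := fun a b => (a, b) ∈ m with hr
  have hDne : ∀ a b, r a b → D a b ∧ a ≠ b := fun a b h => hsub h
  have htne : ∀ a b, Relation.TransGen r a b → a ≠ b := by
    intro a b h hab; subst hab; exact hacy a h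
  -- no 3-step r-walk
  have h3 : ∀ a b c d, r a b → r b c → r c d → False := by
    intro a b c d hab hbc hcd
    have t1 : Relation.TransGen r a b := .single hab
    have t2 : Relation.TransGen r b c := .single hbc
    have t3 : Relation.TransGen r c d := .single hcd
    exact hpath ⟨a, b, c, d, htne _ _ t1, htne _ _ (t1.trans t2),
      htne _ _ ((t1.trans t2).trans t3), htne _ _ t2, htne _ _ (t2.trans t3),
      htne _ _ t3, (hDne _ _ hab).1, (hDne _ _ hbc).1, (hDne _ _ hcd).1⟩
  -- maximality: every arc of D is in m, or closed back by an r-path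
  have hclose : ∀ u v, D u v → u ≠ v → r u v ∨ Relation.TransGen r v u := by
    intro u v hD huv
    by_contra hcon
    push_neg at hcon
    obtain ⟨hnm, hnt⟩ := hcon
    set s : Set (V × V) := insert (u, v) m with hs
    have hdec : ∀ x y, Relation.TransGen (fun a b => (a, b) ∈ s) x y →
        Relation.TransGen r x y ∨
          (Relation.ReflTransGen r x u ∧ Relation.ReflTransGen r v y) := by
      intro x y h
      induction h with
      | single h =>
        rcases h with h | h
        · injection h with h1 h2
          subst h1; subst h2
          exact Or.inr ⟨.refl, .refl⟩
        · exact Or.inl (.single h)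
      | tail hxb hbc ih =>
        rename_i b c
        rcases hbc with hbc | hbc
        · injection hbc with hb hcc
          subst hb; subst hcc
          rcases ih with ih | ih
          · exact Or.inr ⟨ih.to_reflTransGen, .refl⟩
          · -- v ⇝ u in r : contradiction
            rcases (Relation.reflTransGen_iff_eq_or_transGen.mp ih.2) with h | h
            · exact absurd h huv
            · exact absurd h hnt
        · rcases ih with ih | ih
          · exact Or.inl (ih.tail hbc)
          · exact Or.inr ⟨ih.1, ih.2.tail hbc⟩
    have hsF : s ∈ F := by
      constructor
      · intro p hp
        rcases hp with hp | hp
        · rw [hp]; exact ⟨hD, huv⟩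
        · exact hsub hp
      · intro x hx
        rcases hdec x x hx with h | h
        · exact hacy x h
        · have : Relation.ReflTransGen r v u := h.2.trans h.1
          rcases Relation.reflTransGen_iff_eq_or_transGen.mp this with h' | h'
          · exact huv h'
          · exact hnt h'

    have heq : m = s := hmax s hsF (by intro p hp; exact Or.inr hp)
    exact hnm (show (u, v) ∈ m by rw [heq]; exact Or.inl rfl)
  -- the level function
  set c : V → ℕ := fun v =>
    if ∃ x y, r y x ∧ r x v then 2 else if ∃ x, r x v then 1 else 0 with hc
  have hle2 : ∀ v, c v ≤ 2 := by
    intro v; simp only [hc]; split <;> [omega; (split <;> omega)]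
  have L1 : ∀ a b, r a b → c a < c b := by
    intro a b hab
    have hb1 : ∃ x, r x b := ⟨a, hab⟩
    have ha2 : ¬ ∃ x y, r y x ∧ r x a := by
      rintro ⟨x, y, hyx, hxa⟩; exact h3 y x a b hyx hxa hab
    by_cases ha1 : ∃ x, r x a
    · obtain ⟨x, hxa⟩ := ha1
      have hb2 : ∃ x y, r y x ∧ r x b := ⟨a, x, hxa, hab⟩
      simp only [hc, if_pos hb2, if_neg ha2, if_pos (⟨x, hxa⟩ : ∃ x, r x a)]
      omega
    · have h0 : c a = 0 := by simp only [hc, if_neg ha2, if_neg ha1]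
      have h1 : 1 ≤ c b := by
        simp only [hc]
        split
        · omega
        · simp [hb1]
      omega
  have L2 : ∀ a b, Relation.TransGen r a b → c a < c b := by
    intro a b h
    induction h with
    | single h => exact L1 _ _ h
    | tail _ h ih => exact lt_trans ih (L1 _ _ h)
  -- properness
  have hprop : ∀ u v, (SimpleGraph.fromRel D).Adj u v → c u ≠ c v := by
    intro u v hadj
    rw [SimpleGraph.fromRel_adj] at hadj
    obtain ⟨hne, hD⟩ := hadj
    rcases hD with hD | hD
    · rcases hclose u v hD hne with h | h
      · exact Nat.ne_of_lt (L1 _ _ h)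
      · exact (Nat.ne_of_lt (L2 _ _ h)).symm
    · rcases hclose v u hD hne.symm with h | h
      · exact (Nat.ne_of_lt (L1 _ _ h)).symm
      · exact Nat.ne_of_lt (L2 _ _ h)
  exact ⟨SimpleGraph.Coloring.mk (fun v => ⟨c v, by have := hle2 v; omega⟩)
    (fun {u v} h => by simpa [Fin.ext_iff] using hprop u v h)⟩
end

section
/- (Gallai–Roy, general form) If every directed path in an orientation D of a graph G has at most k edges, then G is (k+1)-colorable. -/
open Relation

private lemma decomp_aux {α : Type*} {R : α → α → Prop} {u v a b : α}
    (h : TransGen (fun x y => R x y ∨ (x = u ∧ y = v)) a b) :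
    TransGen R a b ∨ (ReflTransGen R a u ∧ ReflTransGen R v b) := by
  induction h with
  | single h =>
    rcases h with h | ⟨rfl, rfl⟩
    · exact Or.inl (TransGen.single h)
    · exact Or.inr ⟨ReflTransGen.refl, ReflTransGen.refl⟩
  | tail _ h ih =>
    rcases h with h | ⟨rfl, rfl⟩
    · rcases ih with ih | ⟨h1, h2⟩
      · exact Or.inl (ih.tail h)
      · exact Or.inr ⟨h1, h2.tail h⟩
    · rcases ih with ih | ⟨h1, _⟩
      · exact Or.inr ⟨ih.to_reflTransGen, ReflTransGen.refl⟩
      · exact Or.inr ⟨h1, ReflTransGen.refl⟩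

private lemma path_transGen {α : Type*} {R : α → α → Prop} {m : ℕ} {p : Fin (m + 1) → α}
    (harc : ∀ i : Fin m, R (p i.castSucc) (p i.succ)) :
    ∀ (j : ℕ) (hj : j < m + 1) (i : ℕ) (hi : i < j),
      TransGen R (p ⟨i, lt_trans hi hj⟩) (p ⟨j, hj⟩) := by
  intro j
  induction j with
  | zero => intro _ i hi; omega
  | succ j ih =>
    intro hj i hi
    have hjm : j < m := by omega
    have harc' : R (p ⟨j, by omega⟩) (p ⟨j + 1, hj⟩) := by
      have := harc ⟨j, hjm⟩
      simpa [Fin.castSucc, Fin.succ] using this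
    rcases Nat.lt_or_ge i j with hij | hij
    · exact (ih (by omega) i hij).tail harc'
    · have : i = j := by omega
      subst this
      exact TransGen.single harc'

/-- Gallai–Roy, general form: if every directed path in an orientation `D` of a
graph `G` has at most `k` edges, then `G` is `(k+1)`-colorable. -/
theorem stmt_3 {V : Type*} [Fintype V] (G : SimpleGraph V) (D : V → V → Prop) (k : ℕ)
    (horient : ∀ u v : V, G.Adj u v ↔ (D u v ∨ D v u))
    (hanti : ∀ u v : V, D u v → ¬ D v u)
    (hpath : ∀ (m : ℕ) (p : Fin (m + 1) → V), Function.Injective p →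
      (∀ i : Fin m, D (p i.castSucc) (p i.succ)) → m ≤ k) :
    G.Colorable (k + 1) := by
  classical
  -- the property of being an acyclic sub-orientation of D
  set Ps : Finset (V × V) → Prop := fun A =>
    (∀ e ∈ A, D e.1 e.2) ∧ ∀ x : V, ¬ TransGen (fun a b => (a, b) ∈ A) x x with hPs
  have hPs_empty : Ps ∅ := by
    constructor
    · simp
    · intro x hx
      cases hx with
      | single h => simp at h
      | tail _ h => simp at h
  -- pick a Ps-set of maximal cardinality
  obtain ⟨A, hAmem, hmax⟩ :=
    Finset.exists_max_image (Finset.univ.filter fun A => Ps A) Finset.card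
      ⟨∅, Finset.mem_filter.mpr ⟨Finset.mem_univ _, hPs_empty⟩⟩
  have hA : Ps A := (Finset.mem_filter.mp hAmem).2
  have hmax' : ∀ B, Ps B → B.card ≤ A.card := fun B hB =>
    hmax B (Finset.mem_filter.mpr ⟨Finset.mem_univ _, hB⟩)
  set R : V → V → Prop := fun u v => (u, v) ∈ A with hR
  have hRD : ∀ u v, R u v → D u v := fun u v h => hA.1 (u, v) h
  have hacy : ∀ x, ¬ TransGen R x x := hA.2
  haveI : IsTrans V (TransGen R) := ⟨fun _ _ _ => TransGen.trans⟩
  haveI : IsIrrefl V (TransGen R) := ⟨hacy⟩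
  have hwf : WellFounded (TransGen R) := Finite.wellFounded_of_trans_of_irrefl _
  -- height function
  set F : (v : V) → ((u : V) → TransGen R u v → ℕ) → ℕ := fun v ih =>
    (Finset.univ.filter (fun u => R u v)).attach.sup
      (fun u => ih u.1 (TransGen.single (Finset.mem_filter.mp u.2).2) + 1) with hF
  set f : V → ℕ := hwf.fix F with hf
  have hfix : ∀ v, f v = (Finset.univ.filter (fun u => R u v)).attach.sup
      (fun u => f u.1 + 1) := by
    intro v
    rw [hf, WellFounded.fix_eq]
  have hlt : ∀ u v, R u v → f u < f v := by
    intro u v h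
    have hmem : u ∈ Finset.univ.filter (fun u => R u v) := by
      simp [h]
    have h2 : f u + 1 ≤ f v := by
      rw [hfix v]
      exact Finset.le_sup (f := fun (w : {x // x ∈ Finset.univ.filter (fun u => R u v)}) => f w.1 + 1)
        (Finset.mem_attach _ ⟨u, hmem⟩)
    omega
  have hlt' : ∀ u v, TransGen R u v → f u < f v := by
    intro u v h
    induction h with
    | single h => exact hlt _ _ h
    | tail _ h ih => exact lt_trans ih (hlt _ _ h)
  -- the height is realized by a path
  have hreal : ∀ v : V, ∃ p : Fin (f v + 1) → V,
      (∀ i : Fin (f v), R (p i.castSucc) (p i.succ)) ∧ p (Fin.last _) = v := by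
    intro v
    induction v using hwf.induction with
    | _ v ih =>
    by_cases hne : ((Finset.univ.filter (fun u => R u v)).attach).Nonempty
    · obtain ⟨u, _, hu⟩ := Finset.exists_mem_eq_sup _ hne
        (fun (w : {x // x ∈ Finset.univ.filter (fun u => R u v)}) => f w.1 + 1)
      have hRuv : R u.1 v := (Finset.mem_filter.mp u.2).2
      have hfv : f v = f u.1 + 1 := by rw [hfix v, hu]
      obtain ⟨p, harc, hlast⟩ := ih u.1 (TransGen.single hRuv)
      refine ⟨fun i => if h : (i : ℕ) < f u.1 + 1 then p ⟨i, h⟩ else v, ?_, ?_⟩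
      · intro i
        have hi : (i : ℕ) < f v := i.2
        by_cases h : (i : ℕ) + 1 < f u.1 + 1
        · have h0 : (i : ℕ) < f u.1 + 1 := by omega
          have := harc ⟨i, by omega⟩
          simp only [Fin.castSucc, Fin.succ] at this ⊢
          simpa [Fin.castAdd, Fin.castLE, h0, h] using this
        · have hi' : (i : ℕ) = f u.1 := by omega
          have h0 : (i : ℕ) < f u.1 + 1 := by omega
          simp only [Fin.castSucc, Fin.succ, Fin.castAdd, Fin.castLE]
          rw [dif_pos h0, dif_neg (by omega)]
          have heq : (⟨(i : ℕ), h0⟩ : Fin (f u.1 + 1)) = Fin.last (f u.1) := by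
            ext; simp [hi', Fin.last]
          rw [heq, hlast]; exact hRuv
      · have : ¬ ((Fin.last (f v) : ℕ) < f u.1 + 1) := by simp [Fin.last, hfv]
        exact dif_neg this
    · have hfv : f v = 0 := by
        rw [hfix v, Finset.not_nonempty_iff_eq_empty.mp hne, Finset.sup_empty]
        rfl
      exact ⟨fun _ => v, fun i => absurd i.2 (by omega), rfl⟩
  -- bound on f
  have hbound : ∀ v, f v ≤ k := by
    intro v
    obtain ⟨p, harc, _⟩ := hreal v
    have hinj : Function.Injective p := by
      intro i j hij
      by_contra hne
      rcases Fin.lt_or_lt_of_ne hne with h | h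
      · have := path_transGen harc j j.2 i h
        rw [Fin.eta, Fin.eta, hij] at this
        exact hacy _ this
      · have := path_transGen harc i i.2 j h
        rw [Fin.eta, Fin.eta, hij] at this
        exact hacy _ this
    exact hpath (f v) p hinj (fun i => hRD _ _ (harc i))
  -- f is proper on D-arcs
  have hproper : ∀ u v, D u v → f u ≠ f v := by
    intro u v hD
    have huv : u ≠ v := by
      rintro rfl
      exact hanti u u hD hD
    by_cases hRuv : R u v
    · exact Nat.ne_of_lt (hlt _ _ hRuv)
    · -- insert (u,v) creates a cycle by maximality
      have hnotmem : (u, v) ∉ A := hRuv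
      have hnotPs : ¬ Ps (insert (u, v) A) := by
        intro hPs'
        have := hmax' _ hPs'
        rw [Finset.card_insert_of_notMem hnotmem] at this
        omega
      have hDins : ∀ e ∈ insert (u, v) A, D e.1 e.2 := by
        intro e he
        rcases Finset.mem_insert.mp he with rfl | he
        · exact hD
        · exact hA.1 e he
      have : ∃ x : V, TransGen (fun a b => (a, b) ∈ insert (u, v) A) x x := by
        by_contra hcon
        push_neg at hcon
        exact hnotPs ⟨hDins, hcon⟩
      obtain ⟨x, hx⟩ := this
      have hx' : TransGen (fun a b => R a b ∨ (a = u ∧ b = v)) x x := by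
        refine TransGen.mono ?_ x x hx
        intro a b hab
        rcases Finset.mem_insert.mp hab with h | h
        · right; exact ⟨congrArg Prod.fst h, congrArg Prod.snd h⟩
        · left; exact h
      rcases decomp_aux hx' with h | ⟨h1, h2⟩
      · exact absurd h (hacy x)
      · have hvu : ReflTransGen R v u := h2.trans h1
        rcases reflTransGen_iff_eq_or_transGen.mp hvu with h | h
        · exact absurd h huv
        · exact (Nat.ne_of_lt (hlt' _ _ h)).symm
  refine ⟨⟨fun v => ⟨f v, by have := hbound v; omega⟩, ?_⟩⟩
  intro u v hadj hfeq
  have : f u = f v := by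
    have := congrArg Fin.val hfeq
    simpa using this
  rcases (horient u v).mp hadj with h | h
  · exact hproper u v h this
  · exact hproper v u h this.symm
end

section
/- Let G be a finite group with a cyclic Sylow p-subgroup P, and suppose G is p-solvable. Then the p-length of G is 1; equivalently, P O_{p'}(G)/O_{p'}(G) is normal in G/O_{p'}(G). -/
open Subgroup

section fCoreMachinery

variable (p : ℕ)

/-- Predicate on cardinalities: closed under divisors of products, holds at 1. -/
structure GoodFun (f : ℕ → Prop) : Prop where
  one : f 1
  closed : ∀ a b c : ℕ, f a → f b → c ∣ a * b → f c

variable {X : Type*} [Group X] [Finite X]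

lemma card_sup_dvd (A B : Subgroup X) [hB : B.Normal] :
    Nat.card ↥(A ⊔ B) ∣ Nat.card A * Nat.card B := by
  have h1 : Nat.card ↥(A ⊔ B) = Nat.card (↥(A ⊔ B) ⧸ B.subgroupOf (A ⊔ B)) *
      Nat.card ↥(B.subgroupOf (A ⊔ B)) :=
    Subgroup.card_eq_card_quotient_mul_card_subgroup _
  have h2 : Nat.card (↥(A ⊔ B) ⧸ B.subgroupOf (A ⊔ B)) = Nat.card (↥A ⧸ B.subgroupOf A) :=
    Nat.card_congr (QuotientGroup.quotientInfEquivProdNormalQuotient A B).symm.toEquiv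
  have h3 : Nat.card ↥(B.subgroupOf (A ⊔ B)) = Nat.card ↥B :=
    Nat.card_congr (Subgroup.subgroupOfEquivOfLe le_sup_right).toEquiv
  have h4 : Nat.card (↥A ⧸ B.subgroupOf A) ∣ Nat.card ↥A :=
    Subgroup.card_quotient_dvd_card _
  rw [h1, h2, h3]
  exact mul_dvd_mul h4 dvd_rfl

variable (f : ℕ → Prop)

/-- The largest normal subgroup whose cardinality satisfies `f`. -/
noncomputable def fCore : Subgroup X :=
  ({V : Subgroup X | V.Normal ∧ f (Nat.card V)}).toFinite.toFinset.sup id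

variable {f}

lemma fCore_spec (hf : GoodFun f) :
    (fCore (X := X) f).Normal ∧ f (Nat.card (fCore (X := X) f)) := by
  refine Finset.sup_induction (p := fun (V : Subgroup X) => V.Normal ∧ f (Nat.card ↥V))
    ⟨inferInstance, by rw [Subgroup.card_bot]; exact hf.one⟩
    (fun a ha b hb => ?_) (fun V hV => ?_)
  · haveI := ha.1; haveI := hb.1
    exact ⟨Subgroup.sup_normal a b, hf.closed _ _ _ ha.2 hb.2 (card_sup_dvd a b)⟩
  · simpa using (Set.Finite.mem_toFinset _).mp hV

lemma le_fCore {V : Subgroup X} (hV : V.Normal) (hfV : f (Nat.card V)) :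
    V ≤ fCore f :=
  Finset.le_sup (f := id) ((Set.Finite.mem_toFinset _).mpr ⟨hV, hfV⟩)

lemma fCore_map_le (hf : GoodFun f) (e : X ≃* X) :
    (fCore f).map e.toMonoidHom ≤ fCore (X := X) f := by
  obtain ⟨h1, h2⟩ := fCore_spec (X := X) hf
  refine le_fCore (h1.map e.toMonoidHom e.surjective) ?_
  rwa [Nat.card_congr (Subgroup.equivMapOfInjective _ e.toMonoidHom e.injective).symm.toEquiv]

lemma fCore_map (hf : GoodFun f) (e : X ≃* X) :
    (fCore f).map e.toMonoidHom = fCore (X := X) f := by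
  refine le_antisymm (fCore_map_le hf e) ?_
  have h := fCore_map_le hf e.symm
  calc fCore (X := X) f = ((fCore f).map e.symm.toMonoidHom).map e.toMonoidHom := by
        rw [Subgroup.map_map]
        convert (Subgroup.map_id _).symm using 2
        ext x; simp
    _ ≤ (fCore f).map e.toMonoidHom := Subgroup.map_mono h

end fCoreMachinery

section fCoreN
variable {X : Type*} [Group X] [Finite X] {f : ℕ → Prop}

/-- The `f`-core of a subgroup `W`, viewed as a subgroup of the ambient group. -/
noncomputable def fCoreN (f : ℕ → Prop) (W : Subgroup X) : Subgroup X :=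
  (fCore (X := ↥W) f).map W.subtype

lemma fCoreN_le (W : Subgroup X) : fCoreN f W ≤ W := Subgroup.map_subtype_le _

lemma fCoreN_card (hf : GoodFun f) (W : Subgroup X) : f (Nat.card ↥(fCoreN f W)) := by
  have : Nat.card ↥(fCoreN f W) = Nat.card ↥(fCore (X := ↥W) f) :=
    (Nat.card_congr (Subgroup.equivMapOfInjective _ W.subtype W.subtype_injective).toEquiv).symm
  rw [this]
  exact (fCore_spec hf).2

lemma le_fCoreN_self (W : Subgroup X) (hfW : f (Nat.card ↥W)) : W ≤ fCoreN f W := by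
  have h1 : (⊤ : Subgroup ↥W) ≤ fCore f := by
    refine le_fCore inferInstance ?_
    rwa [Nat.card_congr Subgroup.topEquiv.toEquiv]
  have h2 : (⊤ : Subgroup ↥W).map W.subtype = W := by
    rw [← MonoidHom.range_eq_map, Subgroup.range_subtype]
  calc W = (⊤ : Subgroup ↥W).map W.subtype := h2.symm
    _ ≤ fCoreN f W := Subgroup.map_mono h1

lemma fCoreN_conj (hf : GoodFun f) {W : Subgroup X} {x : X}
    (hW : ∀ g ∈ W, x * g * x⁻¹ ∈ W) (hW' : ∀ g ∈ W, x⁻¹ * g * x ∈ W) :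
    ∀ g ∈ fCoreN f W, x * g * x⁻¹ ∈ fCoreN f W := by
  have hWx : W.map ((MulAut.conj x : X ≃* X) : X →* X) = W := by
    apply le_antisymm
    · rintro - ⟨g, hg, rfl⟩
      simpa using hW g hg
    · intro g hg
      refine ⟨x⁻¹ * g * x, hW' g hg, ?_⟩
      simp [MulAut.conj_apply]
      group
  set e : ↥W ≃* ↥W :=
    ((MulAut.conj x : X ≃* X).subgroupMap W).trans (MulEquiv.subgroupCongr hWx) with he
  have hcoe : ∀ v : ↥W, ((e v : ↥W) : X) = x * (v : X) * x⁻¹ := by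
    intro v
    simp only [he, MulEquiv.trans_apply, MulEquiv.subgroupCongr_apply]
    rfl
  rintro - ⟨v, hv, rfl⟩
  have hev : e v ∈ fCore (X := ↥W) f := by
    have := fCore_map (X := ↥W) hf e
    rw [← this]
    exact ⟨v, hv, rfl⟩
  exact ⟨e v, hev, (hcoe v).symm⟩

lemma fCoreN_normal (hf : GoodFun f) {W : Subgroup X} (hWn : W.Normal) :
    (fCoreN f W).Normal := by
  refine ⟨fun n hn g => ?_⟩
  refine fCoreN_conj hf (fun h hh => hWn.conj_mem h hh g) (fun h hh => ?_) n hn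
  simpa using hWn.conj_mem h hh g⁻¹

lemma chain_le_fCoreN (hf : GoodFun f) (m : ℕ) (U : ℕ → Subgroup X)
    (hle : ∀ i < m, U i ≤ U (i + 1))
    (hconj : ∀ i < m, ∀ x ∈ U (i + 1), ∀ g ∈ U i, x * g * x⁻¹ ∈ U i)
    (h0 : f (Nat.card ↥(U 0))) : U 0 ≤ fCoreN f (U m) := by
  induction m with
  | zero => exact le_fCoreN_self _ h0
  | succ m ih =>
    have prev : U 0 ≤ fCoreN f (U m) :=
      ih (fun i hi => hle i (Nat.lt_succ_of_lt hi))
        (fun i hi => hconj i (Nat.lt_succ_of_lt hi))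
    refine prev.trans ?_
    set V := fCoreN f (U m) with hV
    have hVU : V ≤ U (m + 1) := (fCoreN_le _).trans (hle m (Nat.lt_succ_self m))
    have hnorm : (V.subgroupOf (U (m + 1))).Normal := by
      rw [Subgroup.normal_subgroupOf_iff hVU]
      intro h k hh hk
      refine fCoreN_conj hf (fun g hg => hconj m (Nat.lt_succ_self m) k hk g hg)
        (fun g hg => ?_) h hh
      have := hconj m (Nat.lt_succ_self m) k⁻¹ (inv_mem hk) g hg
      simpa using this
    have hcard : f (Nat.card ↥(V.subgroupOf (U (m + 1)))) := by
      rw [Nat.card_congr (Subgroup.subgroupOfEquivOfLe hVU).toEquiv]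
      exact fCoreN_card hf _
    have hsub : V.subgroupOf (U (m + 1)) ≤ fCore f := le_fCore hnorm hcard
    calc V = (V.subgroupOf (U (m + 1))).map (U (m + 1)).subtype := by
          rw [Subgroup.subgroupOf_map_subtype, inf_of_le_left hVU]
      _ ≤ fCoreN f (U (m + 1)) := Subgroup.map_mono hsub

end fCoreN

section Series

/-- The `p`-solvability hypothesis as a predicate. -/
def PSeries (p : ℕ) (X : Type*) [Group X] : Prop :=
  ∃ (n : ℕ) (H : Fin (n + 1) → Subgroup X),
    H 0 = ⊥ ∧ H (Fin.last n) = ⊤ ∧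
    ∀ i : Fin n, H i.castSucc ≤ H i.succ ∧
      ((H i.castSucc).subgroupOf (H i.succ)).Normal ∧
      ((∃ k : ℕ, (H i.castSucc).relIndex (H i.succ) = p ^ k) ∨
        ¬ p ∣ (H i.castSucc).relIndex (H i.succ))

variable {X : Type*} {Y : Type*} [Group X] [Group Y]

lemma subgroupOf_map_normal (φ : X →* Y) {A B : Subgroup X} (hAB : A ≤ B)
    (hN : (A.subgroupOf B).Normal) : ((A.map φ).subgroupOf (B.map φ)).Normal := by
  have h := (Subgroup.normal_subgroupOf_iff hAB).mp hN
  rw [Subgroup.normal_subgroupOf_iff (Subgroup.map_mono hAB)]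
  rintro - - ⟨a, ha, rfl⟩ ⟨b, hb, rfl⟩
  exact ⟨b * a * b⁻¹, h a b ha hb, by simp⟩

lemma relindex_map_dvd (φ : X →* Y) {A B : Subgroup X} (hAB : A ≤ B)
    (hN : (A.subgroupOf B).Normal) :
    (A.map φ).relIndex (B.map φ) ∣ A.relIndex B := by
  haveI := hN
  haveI := subgroupOf_map_normal φ hAB hN
  let ψ : ↥B →* ↥(B.map φ) := φ.subgroupMap B
  have hle : A.subgroupOf B ≤ Subgroup.comap ψ ((A.map φ).subgroupOf (B.map φ)) := by
    intro a ha
    exact ⟨(a : X), ha, rfl⟩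
  let Φ := QuotientGroup.map (A.subgroupOf B) ((A.map φ).subgroupOf (B.map φ)) ψ hle
  have hsurj : Function.Surjective Φ := by
    intro y
    obtain ⟨yb, rfl⟩ := QuotientGroup.mk_surjective y
    obtain ⟨x, rfl⟩ := φ.subgroupMap_surjective B yb
    exact ⟨QuotientGroup.mk x, rfl⟩
  have hdvd := Subgroup.card_dvd_of_surjective Φ hsurj
  rw [← Subgroup.index_eq_card, ← Subgroup.index_eq_card] at hdvd
  exact hdvd

lemma good_dvd {p d m : ℕ} (hp : p.Prime) (h : (∃ k, m = p ^ k) ∨ ¬ p ∣ m)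
    (hdm : d ∣ m) : (∃ k, d = p ^ k) ∨ ¬ p ∣ d := by
  rcases h with ⟨k, rfl⟩ | h
  · obtain ⟨j, -, rfl⟩ := (Nat.dvd_prime_pow hp).mp hdm
    exact Or.inl ⟨j, rfl⟩
  · exact Or.inr fun hpd => h (hpd.trans hdm)

lemma PSeries.map {p : ℕ} (hp : p.Prime) (φ : X →* Y) (hφ : Function.Surjective φ)
    (hps : PSeries p X) : PSeries p Y := by
  obtain ⟨n, H, h0, htop, hstep⟩ := hps
  refine ⟨n, fun i => (H i).map φ, by simp only [h0, Subgroup.map_bot],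
    by simp only [htop, Subgroup.map_top_of_surjective φ hφ], fun i => ?_⟩
  obtain ⟨h1, h2, h3⟩ := hstep i
  exact ⟨Subgroup.map_mono h1, subgroupOf_map_normal φ h1 h2,
    good_dvd hp h3 (relindex_map_dvd φ h1 h2)⟩

end Series
section Main
open Pointwise

variable {X : Type*} [Group X] [Finite X]

lemma centralizer_normal {F : Subgroup X} (hF : F.Normal) :
    (Subgroup.centralizer (F : Set X)).Normal := by
  constructor
  intro c hc g
  rw [Subgroup.mem_centralizer_iff] at hc ⊢
  intro h hh
  have h' : g⁻¹ * h * g ∈ F := by simpa using hF.conj_mem h hh g⁻¹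
  have hcomm := hc _ h'
  calc h * (g * c * g⁻¹) = g * ((g⁻¹ * h * g) * c) * g⁻¹ := by group
    _ = g * (c * (g⁻¹ * h * g)) * g⁻¹ := by rw [hcomm]
    _ = (g * c * g⁻¹) * h := by group

theorem key_normal (p : ℕ) [hp : Fact p.Prime]
    (hps : PSeries p X) (P : Sylow p X) (hPc : IsCyclic ↥(P : Subgroup X))
    (hmin : ∀ L : Subgroup X, L.Normal → ¬ p ∣ Nat.card ↥L → L = ⊥) :
    (P : Subgroup X).Normal := by
  classical
  set fp : ℕ → Prop := fun c => ∃ k, c = p ^ k with hfp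
  have hGp : GoodFun fp := by
    constructor
    · exact ⟨0, by simp⟩
    · rintro a b c ⟨i, rfl⟩ ⟨j, rfl⟩ hc
      rw [← pow_add] at hc
      obtain ⟨k, -, rfl⟩ := (Nat.dvd_prime_pow hp.out).mp hc
      exact ⟨k, rfl⟩
  set fq : ℕ → Prop := fun c => ¬ p ∣ c with hfq
  have hGq : GoodFun fq := by
    constructor
    · exact Nat.Prime.not_dvd_one hp.out
    · rintro a b c ha hb hc hpc
      rcases (Nat.Prime.dvd_mul hp.out).mp (hpc.trans hc) with h | h
      · exact ha h
      · exact hb h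
  set F : Subgroup X := fCore fp with hF
  have hFn : F.Normal := (fCore_spec hGp).1
  have hFcard : fp (Nat.card ↥F) := (fCore_spec hGp).2
  have hFpg : IsPGroup p ↥F := IsPGroup.iff_card.mpr hFcard
  have hFP : F ≤ (P : Subgroup X) := by
    obtain ⟨Q, hFQ⟩ := hFpg.exists_le_sylow
    obtain ⟨g, rfl⟩ := MulAction.exists_smul_eq X Q P
    rw [Sylow.coe_subgroup_smul]
    haveI := hFn
    calc F = MulAut.conj g • F := (Subgroup.Normal.conj_smul_eq_self g F).symm
      _ ≤ MulAut.conj g • (Q : Subgroup X) := by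
          exact Subgroup.pointwise_smul_le_pointwise_smul_iff.mpr hFQ
  suffices hCF : Subgroup.centralizer (F : Set X) ≤ F by
    letI := hPc.commGroup
    have hPC : (P : Subgroup X) ≤ Subgroup.centralizer (F : Set X) := by
      intro x hx
      rw [Subgroup.mem_centralizer_iff]
      intro h hh
      have hhP : h ∈ (P : Subgroup X) := hFP hh
      exact congrArg Subtype.val (mul_comm (⟨h, hhP⟩ : ↥(P : Subgroup X)) ⟨x, hx⟩)
    have hPF : (P : Subgroup X) = F := le_antisymm (hPC.trans hCF) hFP
    rw [hPF]; exact hFn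
  by_contra hCF
  haveI := hFn
  set π := QuotientGroup.mk' F with hπ
  have hπs : Function.Surjective π := QuotientGroup.mk'_surjective F
  -- trivial p-core in the quotient
  have hOp : ∀ Y : Subgroup (X ⧸ F), Y.Normal → fp (Nat.card ↥Y) → Y = ⊥ := by
    intro Y hYn hYc
    have hYp : IsPGroup p ↥Y := IsPGroup.iff_card.mpr hYc
    have hker : IsPGroup p ↥(π.ker) := by
      rw [hπ, QuotientGroup.ker_mk']
      exact hFpg
    have hcomap : IsPGroup p ↥(Subgroup.comap π Y) := hYp.comap_of_ker_isPGroup π hker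
    have hle : Subgroup.comap π Y ≤ F :=
      le_fCore (hYn.comap π) (IsPGroup.iff_card.mp hcomap)
    have : Y ≤ ⊥ := by
      rw [← Subgroup.map_comap_eq_self_of_surjective hπs Y]
      calc Subgroup.map π (Subgroup.comap π Y) ≤ Subgroup.map π F := Subgroup.map_mono hle
        _ = ⊥ := (Subgroup.map_eq_bot_iff F).mpr (by rw [hπ, QuotientGroup.ker_mk'])
    exact le_bot_iff.mp this
  obtain ⟨m, T, hT0, hTtop, hTstep⟩ := PSeries.map hp.out π hπs hps
  set C := Subgroup.centralizer (F : Set X) with hC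
  have hCn : C.Normal := centralizer_normal hFn
  set Cb := Subgroup.map π C with hCb
  have hCbn : Cb.Normal := hCn.map π hπs
  have hCbne : Cb ≠ ⊥ := by
    intro h
    apply hCF
    have := (Subgroup.map_eq_bot_iff C).mp h
    rwa [hπ, QuotientGroup.ker_mk'] at this
  -- ℕ-indexed version of the series
  set t : ℕ → Subgroup (X ⧸ F) := fun i => T ⟨min i m, by omega⟩ with ht
  have ht0 : t 0 = ⊥ := by
    have : (⟨min 0 m, by omega⟩ : Fin (m + 1)) = 0 := by ext; simp
    rw [ht]; simpa [this] using hT0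
  have htm : ∀ k, m ≤ k → t k = ⊤ := by
    intro k hk
    have : (⟨min k m, by omega⟩ : Fin (m + 1)) = Fin.last m := by ext; simpa using hk
    rw [ht]; simpa [this] using hTtop
  have hstep' : ∀ k, t k ≤ t (k + 1) ∧ (∀ x ∈ t (k + 1), ∀ g ∈ t k, x * g * x⁻¹ ∈ t k) ∧
      (k < m → ((∃ i, (t k).relIndex (t (k + 1)) = p ^ i) ∨ ¬ p ∣ (t k).relIndex (t (k + 1)))) := by
    intro k
    by_cases hk : k < m
    · have hfin1 : (⟨min k m, by omega⟩ : Fin (m + 1)) = Fin.castSucc ⟨k, hk⟩ := by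
        ext; simpa using Nat.min_eq_left hk.le
      have hfin2 : (⟨min (k + 1) m, by omega⟩ : Fin (m + 1)) = Fin.succ ⟨k, hk⟩ := by
        ext; simpa using Nat.min_eq_left (Nat.succ_le_of_lt hk)
      have e1 : t k = T (Fin.castSucc ⟨k, hk⟩) := congrArg T hfin1
      have e2 : t (k + 1) = T (Fin.succ ⟨k, hk⟩) := congrArg T hfin2
      obtain ⟨h1, h2, h3⟩ := hTstep ⟨k, hk⟩
      refine ⟨e1 ▸ e2 ▸ h1, ?_, fun _ => e1 ▸ e2 ▸ h3⟩
      rw [e1, e2]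
      intro x hx g hg
      exact (Subgroup.normal_subgroupOf_iff h1).mp h2 g x hg hx
    · have e : t k = t (k + 1) := by
        rw [htm k (by omega), htm (k + 1) (by omega)]
      refine ⟨e.le, ?_, fun h => absurd h hk⟩
      intro x hx g hg
      rw [← e] at hx
      exact Subgroup.mul_mem _ (Subgroup.mul_mem _ hx hg) (Subgroup.inv_mem _ hx)
  -- first index where Cb meets the series
  have hex : ∃ j, j < m ∧ Cb ⊓ t j = ⊥ ∧ Cb ⊓ t (j + 1) ≠ ⊥ := by
    by_contra hno
    push_neg at hno
    have hall : ∀ i, i ≤ m → Cb ⊓ t i = ⊥ := by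
      intro i
      induction i with
      | zero => intro _; rw [ht0]; simp
      | succ i ih =>
        intro hi
        rcases Nat.lt_or_ge i m with h | h
        · exact hno i h (ih (by omega))
        · omega
    have := hall m le_rfl
    rw [htm m le_rfl] at this
    simp only [inf_top_eq] at this
    exact hCbne this
  obtain ⟨j, hjm, hjbot, hjne⟩ := hex
  set A := Cb ⊓ t (j + 1) with hA
  haveI htjN : ((t j).subgroupOf (t (j + 1))).Normal := by
    rw [Subgroup.normal_subgroupOf_iff (hstep' j).1]
    intro h k hh hk
    exact (hstep' j).2.1 k hk h hh
  have hAcard : Nat.card ↥A ∣ (t j).relIndex (t (j + 1)) := by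
    let ψ : ↥A →* ↥(t (j + 1)) ⧸ (t j).subgroupOf (t (j + 1)) :=
      (QuotientGroup.mk' _).comp (Subgroup.inclusion inf_le_right)
    have hinj : Function.Injective ψ := by
      rw [← MonoidHom.ker_eq_bot_iff, Subgroup.eq_bot_iff_forall]
      intro a ha
      rw [MonoidHom.mem_ker] at ha
      have h1 : Subgroup.inclusion (inf_le_right : A ≤ t (j + 1)) a ∈
          (t j).subgroupOf (t (j + 1)) := (QuotientGroup.eq_one_iff _).mp ha
      have h2 : (a : X ⧸ F) ∈ t j := h1
      have h3 : (a : X ⧸ F) ∈ Cb ⊓ t j := ⟨a.2.1, h2⟩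
      rw [hjbot] at h3
      exact Subtype.ext h3
    have hdvd := Subgroup.card_dvd_of_injective ψ hinj
    have : (t j).relIndex (t (j + 1)) =
        Nat.card (↥(t (j + 1)) ⧸ (t j).subgroupOf (t (j + 1))) := Subgroup.index_eq_card _
    rw [this]
    exact hdvd
  have hfA : fp (Nat.card ↥A) ∨ fq (Nat.card ↥A) :=
    good_dvd hp.out ((hstep' j).2.2 hjm) hAcard
  -- the chain from A up to Cb
  have hchain : ∀ f : ℕ → Prop, GoodFun f → f (Nat.card ↥A) → A ≤ fCoreN f Cb := by
    intro f hGf hfa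
    set m' := m - (j + 1) with hm'
    have hU0 : Cb ⊓ t (j + 1 + 0) = A := by rw [hA]
    have hUm : Cb ⊓ t (j + 1 + m') = Cb := by
      rw [show j + 1 + m' = m by omega, htm m le_rfl, inf_top_eq]
    have := chain_le_fCoreN (X := X ⧸ F) hGf m' (fun i => Cb ⊓ t (j + 1 + i))
      (fun i _ => inf_le_inf le_rfl (hstep' (j + 1 + i)).1)
      (fun i _ x hx g hg => ⟨hCbn.conj_mem g hg.1 x, (hstep' (j + 1 + i)).2.1 x hx.2 g hg.2⟩)
      (by simpa only [hU0] using hfa)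
    simpa only [hU0, hUm] using this
  have hAne : A ≠ ⊥ := hjne
  rcases hfA with hcase | hcase
  · -- p-group case: contradiction with trivial p-core
    have hEbot := hOp (fCoreN fp Cb) (fCoreN_normal hGp hCbn) (fCoreN_card hGp Cb)
    have := hchain fp hGp hcase
    rw [hEbot] at this
    exact hAne (le_bot_iff.mp this)
  · -- p'-group case
    set E := fCoreN fq Cb with hE
    have hEn : E.Normal := fCoreN_normal hGq hCbn
    have hEcard : fq (Nat.card ↥E) := fCoreN_card hGq Cb
    have hAE : A ≤ E := hchain fq hGq hcase
    have hEne : E ≠ ⊥ := fun h => hAne (le_bot_iff.mp (h ▸ hAE))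
    have hECb : E ≤ Cb := fCoreN_le Cb
    set W := Subgroup.comap π E with hW
    set D := W ⊓ C with hD
    have hDn : D.Normal :=
      ⟨fun n hn g => ⟨(hEn.comap π).conj_mem n hn.1 g, hCn.conj_mem n hn.2 g⟩⟩
    have hDC : D ≤ C := inf_le_right
    have hmapD : Subgroup.map π D = E := by
      apply le_antisymm
      · calc Subgroup.map π D ≤ Subgroup.map π W := Subgroup.map_mono inf_le_left
          _ = E := Subgroup.map_comap_eq_self_of_surjective hπs E
      · intro e he
        obtain ⟨c, hc, rfl⟩ := hECb he
        exact ⟨c, ⟨he, hc⟩, rfl⟩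
    set ψ : ↥D →* X ⧸ F := π.comp D.subtype with hψ
    have hrange : ψ.range = E := by
      rw [hψ, MonoidHom.range_comp, Subgroup.range_subtype, hmapD]
    have hkerψ : ψ.ker = F.subgroupOf D := by
      ext x
      simp [hψ, MonoidHom.mem_ker, Subgroup.mem_subgroupOf, hπ, QuotientGroup.eq_one_iff]
    set S := F.subgroupOf D with hS
    haveI hSn : S.Normal := by rw [hS]; infer_instance
    have hSp : IsPGroup p ↥S := hFpg.comap_of_injective D.subtype D.subtype_injective
    have hSindex : S.index = Nat.card ↥E := by
      rw [Subgroup.index_eq_card]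
      calc Nat.card (↥D ⧸ S) = Nat.card ↥ψ.range := by
            rw [← hkerψ]
            exact Nat.card_congr (QuotientGroup.quotientKerEquivRange ψ).toEquiv
        _ = Nat.card ↥E := by rw [hrange]
    obtain ⟨a, hacard⟩ := IsPGroup.iff_card.mp hSp
    have hcop : (Nat.card ↥S).Coprime S.index := by
      rw [hacard, hSindex]
      exact Nat.Coprime.pow_left a ((Nat.Prime.coprime_iff_not_dvd hp.out).mpr hEcard)
    obtain ⟨Qh, hQc⟩ := Subgroup.exists_right_complement'_of_coprime hcop
    set Q := Subgroup.map D.subtype Qh with hQ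
    have hQhcard : Nat.card ↥Qh = Nat.card ↥E := by
      have h2 : Nat.card ↥S * Nat.card ↥Qh = Nat.card ↥D := hQc.card_mul
      have h3 : Nat.card ↥D = Nat.card (↥D ⧸ S) * Nat.card ↥S :=
        Subgroup.card_eq_card_quotient_mul_card_subgroup S
      have h4 : Nat.card (↥D ⧸ S) = S.index := (Subgroup.index_eq_card S).symm
      have h5 : Nat.card ↥S * Nat.card ↥Qh = Nat.card ↥S * S.index := by
        rw [h2, h3, h4]; ring
      have h6 : 0 < Nat.card ↥S := Nat.card_pos
      rw [← hSindex]
      exact Nat.eq_of_mul_eq_mul_left h6 h5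
    have hQcard : Nat.card ↥Q = Nat.card ↥E := by
      rw [hQ, ← hQhcard]
      exact (Nat.card_congr
        (Subgroup.equivMapOfInjective Qh D.subtype D.subtype_injective).toEquiv).symm
    have horder : ∀ x : X, x ∈ Q → ¬ p ∣ orderOf x := by
      rintro - ⟨q, hq, rfl⟩
      rw [orderOf_injective D.subtype D.subtype_injective q]
      intro hdvd
      have hdvd2 : orderOf q ∣ Nat.card ↥Qh := Subgroup.orderOf_dvd_natCard Qh hq
      rw [hQhcard] at hdvd2
      exact hEcard (hdvd.trans hdvd2)
    have hQD : Q ≤ D := Subgroup.map_subtype_le Qh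
    have hmemQ : ∀ x : X, x ∈ D → ¬ p ∣ orderOf x → x ∈ Q := by
      intro x hxD hxord
      obtain ⟨⟨s, q⟩, hsq⟩ := (hQc.existsUnique (⟨x, hxD⟩ : ↥D)).exists
      have hsF : ((s : ↥D) : X) ∈ F := s.2
      have hqC : ((q : ↥D) : X) ∈ C := hDC (q : ↥D).2
      rw [hC, Subgroup.mem_centralizer_iff] at hqC
      have hcomm : Commute ((s : ↥D) : ↥D) ((q : ↥D) : ↥D) := by
        apply Subtype.ext
        push_cast
        exact hqC _ hsF
      have hso : orderOf ((s : ↥D) : ↥D) ∣ p ^ a := by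
        rw [← hacard]
        exact Subgroup.orderOf_dvd_natCard S s.2
      obtain ⟨b, -, hsb⟩ := (Nat.dvd_prime_pow hp.out).mp hso
      have hqo : ¬ p ∣ orderOf ((q : ↥D) : ↥D) := by
        intro hdvd
        have := Subgroup.orderOf_dvd_natCard Qh q.2
        rw [hQhcard] at this
        exact hEcard (hdvd.trans this)
      have hcop2 : (orderOf ((s : ↥D) : ↥D)).Coprime (orderOf ((q : ↥D) : ↥D)) := by
        rw [hsb]
        exact Nat.Coprime.pow_left b ((Nat.Prime.coprime_iff_not_dvd hp.out).mpr hqo)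
      have hordx : orderOf (⟨x, hxD⟩ : ↥D) =
          orderOf ((s : ↥D) : ↥D) * orderOf ((q : ↥D) : ↥D) := by
        rw [← hsq]
        exact hcomm.orderOf_mul_eq_mul_orderOf_of_coprime hcop2
      have hordx2 : orderOf x = orderOf (⟨x, hxD⟩ : ↥D) :=
        orderOf_injective D.subtype D.subtype_injective ⟨x, hxD⟩
      have hb0 : b = 0 := by
        by_contra hb
        apply hxord
        rw [hordx2, hordx, hsb]
        exact Dvd.dvd.mul_right (dvd_pow_self p hb) _
      have hs1 : ((s : ↥D) : ↥D) = 1 := by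
        rw [← orderOf_eq_one_iff, hsb, hb0, pow_zero]
      have hxq : (⟨x, hxD⟩ : ↥D) = (q : ↥D) := by
        rw [← hsq, hs1, one_mul]
      exact ⟨(q : ↥D), q.2, by rw [← hxq]; rfl⟩
    have hQn : Q.Normal := by
      constructor
      intro n hn g
      refine hmemQ _ (hDn.conj_mem n (hQD hn) g) ?_
      have : orderOf (g * n * g⁻¹) = orderOf n := by
        have := orderOf_injective (MulAut.conj g).toMonoidHom (MulEquiv.injective _) n
        simpa using this
      rw [this]
      exact horder n hn
    have hQbot : Q = ⊥ := hmin Q hQn (by rw [hQcard]; exact hEcard)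
    refine hEne (Subgroup.card_eq_one.mp ?_)
    rw [← hQcard, hQbot, Subgroup.card_bot]

end Main

/-- A `p`-solvable finite group with cyclic Sylow `p`-subgroup has `p`-length 1:
the image of `P` in `G / O_{p'}(G)` is normal. Here `p`-solvability is expressed by
a subnormal series whose factors are `p`-groups or `p'`-groups, and `K = O_{p'}(G)`
is the largest normal subgroup of order prime to `p`. -/
theorem stmt_16 {G : Type*} [Group G] [Fintype G] (p : ℕ) [Fact p.Prime]
    (hpsolv : ∃ (n : ℕ) (H : Fin (n + 1) → Subgroup G),
      H 0 = ⊥ ∧ H (Fin.last n) = ⊤ ∧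
      ∀ i : Fin n, H i.castSucc ≤ H i.succ ∧
        ((H i.castSucc).subgroupOf (H i.succ)).Normal ∧
        ((∃ k : ℕ, (H i.castSucc).relIndex (H i.succ) = p ^ k) ∨
          ¬ p ∣ (H i.castSucc).relIndex (H i.succ)))
    (P : Sylow p G) (hP : IsCyclic ↥(P : Subgroup G))
    (K : Subgroup G) [hKn : K.Normal] (hKp' : ¬ p ∣ Nat.card K)
    (hKmax : ∀ L : Subgroup G, L.Normal → ¬ p ∣ Nat.card L → L ≤ K) :
    ((P : Subgroup G).map (QuotientGroup.mk' K)).Normal := by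
  classical
  set π := QuotientGroup.mk' K with hπ
  have hπs : Function.Surjective π := QuotientGroup.mk'_surjective K
  have hps : PSeries p G := hpsolv
  have hps' : PSeries p (G ⧸ K) := PSeries.map (Fact.out : p.Prime) π hπs hps
  let P' : Sylow p (G ⧸ K) := P.mapSurjective hπs
  have hP'coe : (P' : Subgroup (G ⧸ K)) = (P : Subgroup G).map π :=
    Sylow.coe_mapSurjective hπs P
  have hP'cyc : IsCyclic ↥(P' : Subgroup (G ⧸ K)) := by
    rw [hP'coe]
    exact isCyclic_of_surjective _ (π.subgroupMap_surjective (P : Subgroup G))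
  have hmin : ∀ L : Subgroup (G ⧸ K), L.Normal → ¬ p ∣ Nat.card ↥L → L = ⊥ := by
    intro L hLn hLp
    have hcomapn : (Subgroup.comap π L).Normal := hLn.comap π
    have hKle : K ≤ Subgroup.comap π L := by
      intro k hk
      have : π k = 1 := by
        rw [← MonoidHom.mem_ker, hπ, QuotientGroup.ker_mk']
        exact hk
      rw [Subgroup.mem_comap, this]; exact L.one_mem
    have hcard : Nat.card ↥(Subgroup.comap π L) = Nat.card ↥L * Nat.card ↥K := by
      set ψ : ↥(Subgroup.comap π L) →* G ⧸ K := π.comp (Subgroup.comap π L).subtype with hψ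
      have hker : ψ.ker = K.subgroupOf (Subgroup.comap π L) := by
        ext x
        simp [hψ, MonoidHom.mem_ker, Subgroup.mem_subgroupOf, hπ, QuotientGroup.eq_one_iff]
      have hrange : ψ.range = L := by
        rw [hψ, MonoidHom.range_comp, Subgroup.range_subtype,
          Subgroup.map_comap_eq_self_of_surjective hπs]
      calc Nat.card ↥(Subgroup.comap π L)
          = Nat.card (↥(Subgroup.comap π L) ⧸ K.subgroupOf (Subgroup.comap π L)) *
            Nat.card ↥(K.subgroupOf (Subgroup.comap π L)) :=
            Subgroup.card_eq_card_quotient_mul_card_subgroup _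
        _ = Nat.card ↥L * Nat.card ↥K := by
            congr 1
            · rw [← hker]
              rw [Nat.card_congr (QuotientGroup.quotientKerEquivRange ψ).toEquiv, hrange]
            · exact Nat.card_congr (Subgroup.subgroupOfEquivOfLe hKle).toEquiv
    have hp' : ¬ p ∣ Nat.card ↥(Subgroup.comap π L) := by
      rw [hcard]
      intro hdvd
      rcases (Nat.Prime.dvd_mul (Fact.out : p.Prime)).mp hdvd with h | h
      · exact hLp h
      · exact hKp' h
    have hle := hKmax _ hcomapn hp'
    have : L ≤ ⊥ := by
      rw [← Subgroup.map_comap_eq_self_of_surjective hπs L]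
      calc Subgroup.map π (Subgroup.comap π L) ≤ Subgroup.map π K := Subgroup.map_mono hle
        _ = ⊥ := (Subgroup.map_eq_bot_iff K).mpr (by rw [hπ, QuotientGroup.ker_mk'])
    exact le_bot_iff.mp this
  have hfin : Finite G := inferInstance
  have := key_normal p hps' P' hP'cyc hmin
  rwa [hP'coe] at this
end
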